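/- Let A be a finite set of candidates with |A| ≥ 3 and let N = {1,…,n} be a finite set of voters. Every Social Choice Function f : 𝒫^n → A that is onto (surjective) and Strategy-Proof is dictatorial, i.e., there exists a voter i such that f(P) is the top-ranked candidate of P_i at every profile P. (Gibbard–Satterthwaite Theorem.) -/

import Mathlib

/-- A voter preference: a strict linear (complete, transitive, antisymmetric) order on `A`. -/
abbrev Pref (A : Type*) := {r : A → A → Prop // IsStrictTotalOrder A r}

/-- Strategy-proofness: no voter can obtain an outcome she strictly prefers (under her
true order) by misreporting. -/
def StrategyProof {A : Type*} {n : ℕ} (f : (Fin n → Pref A) → A) : Prop :=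
  ∀ (i : Fin n) (P : Fin n → Pref A) (Q : Pref A),
    ¬ (P i).1 (f (Function.update P i Q)) (f P)

/-- Dictatorship for a social choice function: some voter's top-ranked candidate is
always chosen. -/
def DictatorialSCF {A : Type*} {n : ℕ} (f : (Fin n → Pref A) → A) : Prop :=
  ∃ i : Fin n, ∀ P : Fin n → Pref A, ∀ b : A, b ≠ f P → (P i).1 (f P) b


/-!
Strategy-proofness gives Maskin monotonicity: the winner stays the winner when no voter moves
it down relative to any other alternative (change the voters' orders one at a time). From
monotonicity and surjectivity alone (Muller–Satterthwaite) the outcome is Pareto optimal, so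
when every voter puts `a` and `b` on top the outcome is `a` or `b`. Call a coalition decisive
for `a` against `b` if it obtains `a` when it reports `a ≻ b` and everyone else `b ≻ a`.
Profiles on three alternatives show that decisiveness does not depend on the pair and is
closed under intersection, so the decisive coalitions form an ultrafilter on the finite set of
voters. It is principal, and its generator is a dictator.
-/

open Function

namespace Pref

variable {A : Type*}

lemma irrefl (P : Pref A) (x : A) : ¬ P.1 x x := P.2.irrefl x

lemma trans (P : Pref A) {x y z : A} : P.1 x y → P.1 y z → P.1 x z := P.2.trans x y z

lemma asymm (P : Pref A) {x y : A} (h : P.1 x y) : ¬ P.1 y x :=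
  fun h' => P.irrefl x (P.trans h h')

lemma rel_of_not_rel (P : Pref A) {x y : A} (h : ¬ P.1 x y) (hne : x ≠ y) : P.1 y x :=
  by_contra fun h' => hne (P.2.trichotomous x y h h')

def raise (x : A) (P : Pref A) : Pref A :=
  ⟨fun u v => v ≠ x ∧ (u = x ∨ P.1 u v),
    { trichotomous := by
        intro u v huv hvu
        by_contra hne
        by_cases hu : u = x
        · exact huv ⟨fun hv => hne (hu.trans hv.symm), Or.inl hu⟩
        by_cases hv : v = x
        · exact hvu ⟨fun hu => hne (hu.trans hv.symm), Or.inl hv⟩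
        exact huv ⟨hv, Or.inr <|
          P.rel_of_not_rel (fun h => hvu ⟨hu, Or.inr h⟩) (Ne.symm hne)⟩
      irrefl := fun u ⟨hu, h⟩ => h.elim hu (P.irrefl u)
      trans := fun u v w ⟨hv, huv⟩ ⟨hw, hvw⟩ =>
        ⟨hw, huv.imp_right fun h => P.trans h (hvw.resolve_left hv)⟩ }⟩

@[simp] lemma raise_rel {x u v : A} {P : Pref A} :
    (raise x P).1 u v ↔ v ≠ x ∧ (u = x ∨ P.1 u v) := Iff.rfl

/-- Alternatives outside `L` are ranked below it in an arbitrary order. -/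
noncomputable def ofList : List A → Pref A
  | [] => ⟨WellOrderingRel, inferInstance⟩
  | x :: L => raise x (ofList L)

@[simp] lemma ofList_cons (x : A) (L : List A) : ofList (x :: L) = raise x (ofList L) := rfl

end Pref

section SocialChoice

variable {A : Type*} {n : ℕ}

def MaskinMonotonic (f : (Fin n → Pref A) → A) : Prop :=
  ∀ ⦃P P' : Fin n → Pref A⦄ ⦃x : A⦄,
    f P = x → (∀ i z, (P i).1 x z → (P' i).1 x z) → f P' = x

namespace StrategyProof

variable {f : (Fin n → Pref A) → A}

lemma apply_update_eq (hSP : StrategyProof f) {P : Fin n → Pref A} {i : Fin n} {Q : Pref A}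
    (h : ∀ z, (P i).1 (f P) z → Q.1 (f P) z) : f (update P i Q) = f P := by
  by_contra hne
  have hup : (P i).1 (f P) (f (update P i Q)) := (P i).rel_of_not_rel (hSP i P Q) hne
  have hdown := hSP i (update P i Q) (P i)
  rw [update_idem, update_eq_self, update_self] at hdown
  exact hdown (h _ hup)

lemma maskinMonotonic (hSP : StrategyProof f) : MaskinMonotonic f := by
  classical
  intro P P' x hx h
  suffices ∀ s : Finset (Fin n), f (s.piecewise P' P) = x by simpa using this Finset.univ
  intro s
  induction s using Finset.induction_on with
  | empty => simpa using hx
  | insert j s hj ih =>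
    rw [Finset.piecewise_insert, ← ih]
    refine hSP.apply_update_eq fun z hz => ?_
    rw [Finset.piecewise_eq_of_notMem _ _ _ hj, ih] at hz
    exact ih ▸ h j z hz

end StrategyProof

open Classical in
noncomputable def splitProfile (S : Set (Fin n)) (p q : Pref A) : Fin n → Pref A :=
  fun i => if i ∈ S then p else q

lemma splitProfile_compl (S : Set (Fin n)) (p q : Pref A) :
    splitProfile Sᶜ q p = splitProfile S p q := by
  funext i
  by_cases h : i ∈ S <;> simp [splitProfile, h]

lemma splitProfile_rel_imp {S : Set (Fin n)} {p q p' q' : Pref A} {x : A}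
    (hp : ∀ z, p.1 x z → p'.1 x z) (hq : ∀ z, q.1 x z → q'.1 x z) (i : Fin n) (z : A) :
    (splitProfile S p q i).1 x z → (splitProfile S p' q' i).1 x z := by
  by_cases h : i ∈ S <;> simp only [splitProfile, h, if_true, if_false]
  exacts [hp z, hq z]

/-- `S` obtains `a` when it ranks `a ≻ b` and everyone else `b ≻ a`, both above all other
alternatives. -/
def IsDecisive (f : (Fin n → Pref A) → A) (S : Set (Fin n)) (a b : A) : Prop :=
  f (splitProfile S (Pref.ofList [a, b]) (Pref.ofList [b, a])) = a

namespace MaskinMonotonic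

variable {f : (Fin n → Pref A) → A}

lemma apply_eq_of_forall_top (hM : MaskinMonotonic f) (hf : Surjective f)
    {P : Fin n → Pref A} {x : A} (h : ∀ i z, z ≠ x → (P i).1 x z) : f P = x := by
  obtain ⟨P₀, hP₀⟩ := hf x
  exact hM hP₀ fun i z hz => h i z fun hzx => (P₀ i).irrefl x (hzx ▸ hz)

lemma apply_ne_of_forall_rel (hM : MaskinMonotonic f) (hf : Surjective f)
    {P : Fin n → Pref A} {x y : A} (hyx : y ≠ x) (h : ∀ i, (P i).1 y x) : f P ≠ x := by
  intro hx
  have hy : f (fun _ => Pref.ofList [y, x]) = y :=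
    hM.apply_eq_of_forall_top hf fun _ z hz => by simp [hz]
  have hx' : f (fun _ => Pref.ofList [y, x]) = x := hM hx fun i z hz => by
    simp only [Pref.ofList_cons, Pref.raise_rel, hyx.symm, false_or, true_or, and_true]
    exact ⟨fun hzy => (P i).asymm (hzy ▸ hz) (h i), fun hzx => (P i).irrefl x (hzx ▸ hz)⟩
  exact hyx (hy.symm.trans hx')

lemma apply_splitProfile_eq_or (hM : MaskinMonotonic f) (hf : Surjective f)
    (S : Set (Fin n)) {a b : A} (hab : a ≠ b) :
    f (splitProfile S (Pref.ofList [a, b]) (Pref.ofList [b, a])) = a ∨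
      f (splitProfile S (Pref.ofList [a, b]) (Pref.ofList [b, a])) = b := by
  set y := f (splitProfile S (Pref.ofList [a, b]) (Pref.ofList [b, a])) with hy
  by_contra! h
  refine hM.apply_ne_of_forall_rel hf (Ne.symm h.1) (fun i => ?_) hy.symm
  by_cases hi : i ∈ S <;> simp [splitProfile, hi, h.1, h.2, hab]

end MaskinMonotonic

section Decisive

variable {f : (Fin n → Pref A) → A} {S T : Set (Fin n)} {a b c : A}

lemma isDecisive_compl_iff (hM : MaskinMonotonic f) (hf : Surjective f) (hab : a ≠ b) :
    IsDecisive f Sᶜ b a ↔ ¬ IsDecisive f S a b := by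
  rw [IsDecisive, IsDecisive, splitProfile_compl]
  have := hM.apply_splitProfile_eq_or hf S hab
  grind

lemma isDecisive_univ (hM : MaskinMonotonic f) (hf : Surjective f) (a b : A) :
    IsDecisive f Set.univ a b :=
  hM.apply_eq_of_forall_top hf fun _ z hz => by simp [splitProfile, hz]

lemma IsDecisive.mono (hM : MaskinMonotonic f) (hST : S ⊆ T) (h : IsDecisive f S a b) :
    IsDecisive f T a b := by
  refine hM h fun i z hz => ?_
  by_cases hS : i ∈ S
  · simpa [splitProfile, hS, hST hS] using hz
  by_cases hT : i ∈ T
  · simp only [splitProfile, hS, hT, if_true, if_false, Pref.ofList_cons, Pref.raise_rel] at hz ⊢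
    grind
  · simpa [splitProfile, hS, hT] using hz

lemma IsDecisive.replace_right (hM : MaskinMonotonic f) (hf : Surjective f)
    (h : IsDecisive f S a b) (hab : a ≠ b) (hca : c ≠ a) : IsDecisive f S a c := by
  set y := f (splitProfile S (Pref.ofList [a, b, c]) (Pref.ofList [b, c, a])) with hy
  have hy_ab : y = a ∨ y = b := by
    by_contra! h'
    refine hM.apply_ne_of_forall_rel hf (Ne.symm h'.2) (fun i => ?_) hy.symm
    by_cases hi : i ∈ S <;> simp [splitProfile, hi, h'.1, h'.2, hab.symm]
  have hyb : y ≠ b := fun hyb => hab <| h.symm.trans <| hM (hy.symm.trans hyb) <|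
    splitProfile_rel_imp (by simp [hab.symm]) (by simp)
  exact hM (hy.symm.trans (hy_ab.resolve_right hyb))
    (splitProfile_rel_imp (by simp) fun z => by simp [hab, hca.symm])

lemma IsDecisive.replace_left (hM : MaskinMonotonic f) (hf : Surjective f)
    (h : IsDecisive f S a b) (hab : a ≠ b) (hcb : c ≠ b) : IsDecisive f S c b := by
  by_contra h'
  have hc := ((isDecisive_compl_iff hM hf hcb).2 h').replace_right hM hf hcb.symm hab
  exact (isDecisive_compl_iff hM hf hab).1 hc h

lemma IsDecisive.forall_of_ne (hM : MaskinMonotonic f) (hf : Surjective f)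
    (hA : 3 ≤ ENat.card A) (h : IsDecisive f S a b) (hab : a ≠ b) :
    ∀ x y, x ≠ y → IsDecisive f S x y := by
  have h_a : ∀ y, y ≠ a → IsDecisive f S a y := by
    intro y hya
    rcases eq_or_ne y b with rfl | -
    exacts [h, h.replace_right hM hf hab hya]
  have h_ne_a : ∀ x y, x ≠ y → y ≠ a → IsDecisive f S x y := by
    intro x y hxy hya
    rcases eq_or_ne x a with rfl | -
    exacts [h_a y hya, (h_a y hya).replace_left hM hf hya.symm hxy]
  intro x y hxy
  by_cases hya : y = a
  · subst hya
    obtain ⟨c, hcx, hcy⟩ := ENat.exists_ne_ne_of_three_le hA x y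
    exact (h_ne_a x c hcx.symm hcy).replace_right hM hf hcx.symm hxy.symm
  · exact h_ne_a x y hxy hya

lemma IsDecisive.inter (hM : MaskinMonotonic f) (hf : Surjective f) (hS : IsDecisive f S a b)
    (hT : IsDecisive f T b c) (hab : a ≠ b) (hac : a ≠ c) (hbc : b ≠ c) :
    IsDecisive f (S ∩ T) a c := by
  classical
  -- `a ≻ b` exactly on `S`, `b ≻ c` exactly on `T`, `a ≻ c` exactly on `S ∩ T`.
  obtain ⟨Q, hQ⟩ : ∃ Q : Fin n → Pref A, ∀ i, Q i =
      if i ∈ S then (if i ∈ T then Pref.ofList [a, b, c] else Pref.ofList [c, a, b])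
      else (if i ∈ T then Pref.ofList [b, c, a] else Pref.ofList [c, b, a]) :=
    ⟨_, fun _ => rfl⟩
  have hb : f Q ≠ b := fun hQb => hab <| hS.symm.trans <| hM hQb fun i z => by
    by_cases hiS : i ∈ S <;> by_cases hiT : i ∈ T <;>
      simp [hQ, splitProfile, hiS, hiT, hab.symm, hbc]
  have hc : f Q ≠ c := fun hQc => hbc <| hT.symm.trans <| hM hQc fun i z => by
    by_cases hiS : i ∈ S <;> by_cases hiT : i ∈ T <;>
      simp [hQ, splitProfile, hiS, hiT, hac.symm, hbc.symm]
  have ha : f Q = a := by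
    by_contra ha
    refine hM.apply_ne_of_forall_rel hf (Ne.symm ha) (fun i => ?_) rfl
    by_cases hiS : i ∈ S <;> by_cases hiT : i ∈ T <;>
      simp [hQ, hiS, hiT, ha, hb, hc, hab, hac]
  refine hM ha fun i z => ?_
  by_cases hiS : i ∈ S <;> by_cases hiT : i ∈ T <;>
    simp +contextual [hQ, splitProfile, hiS, hiT, hab, hac]

end Decisive

namespace MaskinMonotonic

variable {f : (Fin n → Pref A) → A}

def decisiveFilter (hM : MaskinMonotonic f) (hf : Surjective f) (hA : 3 ≤ ENat.card A) :
    Filter (Fin n) where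
  sets := {S | ∀ a b, a ≠ b → IsDecisive f S a b}
  univ_sets _ _ _ := isDecisive_univ hM hf _ _
  sets_of_superset hS hST a b hab := (hS a b hab).mono hM hST
  inter_sets hS hT a b hab := by
    obtain ⟨c, hca, hcb⟩ := ENat.exists_ne_ne_of_three_le hA a b
    exact (hS a c hca.symm).inter hM hf (hT c b hcb) hca.symm hab hcb

lemma compl_notMem_decisiveFilter_iff (hM : MaskinMonotonic f) (hf : Surjective f)
    (hA : 3 ≤ ENat.card A) (S : Set (Fin n)) :
    Sᶜ ∉ hM.decisiveFilter hf hA ↔ S ∈ hM.decisiveFilter hf hA := by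
  constructor
  · intro hSc
    obtain ⟨a, b, hab, h⟩ : ∃ a b, a ≠ b ∧ ¬ IsDecisive f Sᶜ a b := by
      simpa [decisiveFilter] using hSc
    have hS := (isDecisive_compl_iff hM hf hab).2 h
    rw [compl_compl] at hS
    exact hS.forall_of_ne hM hf hA hab.symm
  · intro hS hSc
    have : Nontrivial A := (ENat.one_lt_card_iff_nontrivial A).1 (lt_of_lt_of_le (by norm_num) hA)
    obtain ⟨a, b, hab⟩ := exists_pair_ne A
    exact (isDecisive_compl_iff hM hf hab).1 (hSc b a hab.symm) (hS a b hab)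

lemma dictatorial_of_isDecisive_singleton (hM : MaskinMonotonic f) {i : Fin n}
    (hi : ∀ a b, a ≠ b → IsDecisive f {i} a b) : DictatorialSCF f := by
  refine ⟨i, fun P z hz => (P i).rel_of_not_rel (fun hzP => hz ?_) hz⟩
  refine (hi z (f P) hz).symm.trans (hM rfl fun j w hw => ?_)
  have hwP : w ≠ f P := fun h => (P j).irrefl _ (h ▸ hw)
  by_cases hj : j = i
  · subst hj
    have hwz : w ≠ z := fun h => (P j).asymm hw (h ▸ hzP)
    simp [splitProfile, hz.symm, hwP, hwz]
  · simp [splitProfile, hj, hwP]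

theorem dictatorial (hM : MaskinMonotonic f) (hf : Surjective f) (hA : 3 ≤ ENat.card A) :
    DictatorialSCF f := by
  set U := Ultrafilter.ofComplNotMemIff _ (hM.compl_notMem_decisiveFilter_iff hf hA)
  obtain ⟨i, hi⟩ := U.eq_pure_of_finite
  have hiU : ({i} : Set (Fin n)) ∈ U := hi ▸ Ultrafilter.mem_pure.2 rfl
  exact hM.dictatorial_of_isDecisive_singleton hiU

end MaskinMonotonic

end SocialChoice

/-- **Gibbard–Satterthwaite Theorem.** -/
theorem gibbard_satterthwaite {A : Type*} [Fintype A] (hA : 3 ≤ Fintype.card A)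
    {n : ℕ} (f : (Fin n → Pref A) → A)
    (honto : Function.Surjective f) (hSP : StrategyProof f) :
    DictatorialSCF f :=
  hSP.maskinMonotonic.dictatorial honto (by simpa [ENat.card_eq_coe_fintype_card] using hA)
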